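/- In the setting of the previous statement (with L = R = 1), the gradient iterates on φ₁ starting at x₀ = ν satisfy x_i = (1 − ih/(2Nh+1))ν and ∇φ₁(x_i) = (1/(2Nh+1))ν for all i = 0,…,N, and φ₁(x_i) = (1/(4Nh+2))·(4Nh+1−2hi)/(2Nh+1). In particular all iterates stay in the region ‖x‖ ≥ 1/(2Nh+1) when 0 < h ≤ 1 (for i ≤ N). -/
import Mathlib

/-- φ₁ with L = R = 1. -/
noncomputable def phi1 (d : ℕ) (h : ℝ) (N : ℕ)
    (x : EuclideanSpace ℝ (Fin d)) : ℝ :=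
  if 1 / (2 * N * h + 1) ≤ ‖x‖ then
    ‖x‖ / (2 * N * h + 1) - 1 / (2 * (2 * N * h + 1) ^ 2)
  else ‖x‖ ^ 2 / 2

open scoped RealInnerProductSpace

lemma phi1_key_bound {d : ℕ} (h : ℝ) (N : ℕ) (hh : 0 ≤ h)
    (ν : EuclideanSpace ℝ (Fin d)) (hν : ‖ν‖ = 1) (r : ℝ)
    (hr : 1 / (2 * N * h + 1) ≤ r) (x : EuclideanSpace ℝ (Fin d)) :
    |phi1 d h N x - phi1 d h N (r • ν) - ⟪(1 / (2 * N * h + 1)) • ν, x - r • ν⟫| ≤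
      ‖x - r • ν‖ ^ 2 / 2 := by
  set c : ℝ := 2 * N * h + 1 with hc
  have hc0 : 0 < c := by positivity
  have hr0 : 0 < r := lt_of_lt_of_le (by positivity) hr
  set s : ℝ := ⟪ν, x⟫ with hs
  set t : ℝ := ‖x‖ with ht
  set u : ℝ := 1 / c with hu
  have hu0 : 0 < u := by positivity
  have hts : |s| ≤ t := by
    calc |s| ≤ ‖ν‖ * ‖x‖ := abs_real_inner_le_norm ν x
    _ = t := by rw [hν, one_mul]
  have hst : s ≤ t := (abs_le.mp hts).2
  have ht0 : 0 ≤ t := norm_nonneg x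
  have hnrv : ‖r • ν‖ = r := by
    rw [norm_smul, hν, mul_one, Real.norm_eq_abs, abs_of_pos hr0]
  have hxv : ⟪x, ν⟫ = s := by rw [hs, real_inner_comm]
  have hsq : ‖x - r • ν‖ ^ 2 = t ^ 2 - 2 * (r * s) + r ^ 2 := by
    rw [norm_sub_sq_real, hnrv, real_inner_smul_right, hxv]
  have hQ0 : 0 ≤ t ^ 2 - 2 * (r * s) + r ^ 2 := hsq ▸ sq_nonneg _
  have hinner : ⟪u • ν, x - r • ν⟫ = u * (s - r) := by
    rw [real_inner_smul_left, inner_sub_right, real_inner_smul_right,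
      real_inner_self_eq_norm_sq, hν, ← hs]
    ring
  have hval : phi1 d h N (r • ν) = r * u - u ^ 2 / 2 := by
    rw [phi1, hnrv, if_pos hr, ← hc, hu]
    have : c ≠ 0 := hc0.ne'
    field_simp
  rw [hval, hinner, hsq, abs_le]
  have htc : t / c = t * u := by rw [hu]; ring
  have h2 : 1 / (2 * c ^ 2) = u ^ 2 / 2 := by rw [hu, div_pow, one_pow, div_div, mul_comm (c ^ 2) 2]
  rw [phi1, ← ht, ← hc, ← hu, htc, h2]
  clear hsq hinner hval hnrv hts h2 htc hs ht hu hc hxv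
  clear_value s t u c
  clear x ν hν hc0
  split_ifs with hcond
  · constructor
    · nlinarith [mul_nonneg hu0.le (sub_nonneg.mpr hst)]
    · nlinarith [sq_nonneg (t - r), mul_nonneg (sub_nonneg.mpr hst) (sub_nonneg.mpr hr)]
  · push_neg at hcond
    constructor
    · nlinarith [sq_nonneg (t - u), mul_nonneg hu0.le (sub_nonneg.mpr hst)]
    · nlinarith [mul_nonneg (sub_nonneg.mpr hr) (by linarith : (0:ℝ) ≤ r + u - 2 * s)]

lemma phi1_hasGradientAt {d : ℕ} (h : ℝ) (N : ℕ) (hh : 0 ≤ h)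
    (ν : EuclideanSpace ℝ (Fin d)) (hν : ‖ν‖ = 1) (r : ℝ)
    (hr : 1 / (2 * N * h + 1) ≤ r) :
    HasGradientAt (phi1 d h N) ((1 / (2 * N * h + 1)) • ν) (r • ν) := by
  rw [hasGradientAt_iff_isLittleO]
  have hbig : (fun x' : EuclideanSpace ℝ (Fin d) =>
      phi1 d h N x' - phi1 d h N (r • ν) - ⟪(1 / (2 * N * h + 1)) • ν, x' - r • ν⟫)
      =O[nhds (r • ν)] fun x' => ‖x' - r • ν‖ ^ 2 := by
    apply Asymptotics.IsBigO.of_bound (1 / 2)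
    refine Filter.Eventually.of_forall fun x' => ?_
    rw [Real.norm_eq_abs, Real.norm_eq_abs, abs_of_nonneg (sq_nonneg ‖x' - r • ν‖)]
    linarith [phi1_key_bound h N hh ν hν r hr x']
  refine hbig.trans_isLittleO ?_
  rw [Asymptotics.isLittleO_iff]
  intro ε hε
  filter_upwards [Metric.ball_mem_nhds (r • ν) hε] with x' hx'
  rw [Metric.mem_ball, dist_eq_norm] at hx'
  rw [Real.norm_eq_abs, abs_of_nonneg (by positivity), sq]
  exact mul_le_mul_of_nonneg_right hx'.le (norm_nonneg _)

lemma phi1_gradient {d : ℕ} (h : ℝ) (N : ℕ) (hh : 0 ≤ h)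
    (ν : EuclideanSpace ℝ (Fin d)) (hν : ‖ν‖ = 1) (r : ℝ)
    (hr : 1 / (2 * N * h + 1) ≤ r) :
    gradient (phi1 d h N) (r • ν) = (1 / (2 * N * h + 1)) • ν :=
  (phi1_hasGradientAt h N hh ν hν r hr).gradient

theorem phi1_iterates
    {d : ℕ} (h : ℝ) (N : ℕ) (hh : 0 < h)
    (ν : EuclideanSpace ℝ (Fin d)) (hν : ‖ν‖ = 1)
    (x : ℕ → EuclideanSpace ℝ (Fin d)) (hx0 : x 0 = ν)
    (hrec : ∀ i, x (i + 1) = x i - h • gradient (phi1 d h N) (x i)) :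
    ∀ i, i ≤ N →
      x i = (1 - i * h / (2 * N * h + 1)) • ν ∧
      gradient (phi1 d h N) (x i) = (1 / (2 * N * h + 1)) • ν ∧
      phi1 d h N (x i) = 1 / (4 * N * h + 2) * ((4 * N * h + 1 - 2 * h * i) / (2 * N * h + 1)) ∧
      (h ≤ 1 → 1 / (2 * N * h + 1) ≤ ‖x i‖) := by
  have hc0 : (0:ℝ) < 2 * N * h + 1 := by positivity
  have hNh : (0:ℝ) ≤ N * h := by positivity
  have hrge : ∀ i : ℕ, i ≤ N → 1 / (2 * N * h + 1) ≤ 1 - i * h / (2 * N * h + 1) := by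
    intro i hi
    have hih : (i:ℝ) * h ≤ 2 * N * h := by
      have : (i:ℝ) ≤ N := by exact_mod_cast hi
      nlinarith
    rw [div_le_iff₀ hc0, sub_mul, div_mul_cancel₀ _ hc0.ne', one_mul]
    linarith
  have main : ∀ i, i ≤ N → x i = (1 - i * h / (2 * N * h + 1)) • ν := by
    intro i
    induction i with
    | zero => intro _; simpa using hx0
    | succ n ih =>
      intro hn
      have hn' : n ≤ N := Nat.le_of_succ_le hn
      have hxn := ih hn'
      rw [hrec n, hxn, phi1_gradient h N hh.le ν hν _ (hrge n hn'), smul_smul, ← sub_smul]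
      congr 1
      push_cast
      ring
  intro i hi
  have hxi := main i hi
  have hnorm : ‖x i‖ = 1 - i * h / (2 * N * h + 1) := by
    rw [hxi, norm_smul, hν, mul_one, Real.norm_eq_abs,
      abs_of_nonneg (le_trans (by positivity) (hrge i hi))]
  refine ⟨hxi, ?_, ?_, fun _ => ?_⟩
  · rw [hxi]
    exact phi1_gradient h N hh.le ν hν _ (hrge i hi)
  · rw [phi1, hnorm, if_pos (hrge i hi)]
    have h1 : (2 * (N:ℝ) * h + 1) ≠ 0 := hc0.ne'
    have h2 : (4 * (N:ℝ) * h + 2) ≠ 0 := by positivity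
    field_simp
    ring
  · rw [hnorm]; exact hrge i hi
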